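/- arXiv:2301.05932 — 11 statements merged into one kernel-verified Lean document; each statement's English description precedes it below -/
import Mathlib

section
/- Let n ≥ 2, let F : ℝⁿ → ℝⁿ be a continuous vector field, and let V : ℝⁿ → ℝ be a smooth Lyapunov function for F with respect to the origin. Then for every vector g ∈ ℝⁿ with g ≠ 0 and every level c > 0 there exists a point x ∈ ℝⁿ with V(x) = c and ⟨∇V(x), g⟩ = 0. -/
open Filter Set

/-- For a smooth Lyapunov function `V` (for a continuous vector field `F`,
with respect to the origin) on `ℝⁿ`, `n ≥ 2`: for every `g ≠ 0` and every level `c > 0`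
there is a point `x` on the level set `V = c` where `⟪∇V x, g⟫ = 0`. -/
theorem levelset_gradient_orthogonal
    (n : ℕ) (hn : 2 ≤ n)
    (F : EuclideanSpace ℝ (Fin n) → EuclideanSpace ℝ (Fin n)) (hF : Continuous F)
    (V : EuclideanSpace ℝ (Fin n) → ℝ)
    (hV_smooth : ContDiff ℝ (⊤ : ℕ∞) V)
    (hV0 : V 0 = 0)
    (hVpos : ∀ x : EuclideanSpace ℝ (Fin n), x ≠ 0 → 0 < V x)
    (hVdec : ∀ x : EuclideanSpace ℝ (Fin n), x ≠ 0 →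
      (inner ℝ (gradient V x) (F x) : ℝ) < 0)
    (hVrad : Tendsto V (cocompact (EuclideanSpace ℝ (Fin n))) atTop)
    (g : EuclideanSpace ℝ (Fin n)) (hg : g ≠ 0)
    (c : ℝ) (hc : 0 < c) :
    ∃ x : EuclideanSpace ℝ (Fin n), V x = c ∧ (inner ℝ (gradient V x) g : ℝ) = 0 := by
  have hVc : Continuous V := hV_smooth.continuous
  -- pick w ≠ 0 orthogonal to g
  obtain ⟨w, hwmem, hw0⟩ : ∃ w ∈ (ℝ ∙ g)ᗮ, w ≠ (0 : EuclideanSpace ℝ (Fin n)) := by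
    rw [← Submodule.ne_bot_iff]
    intro hbot
    have htop : (ℝ ∙ g) = ⊤ := by
      rwa [Submodule.orthogonal_eq_bot_iff] at hbot
    have h1 : Module.finrank ℝ (ℝ ∙ g) = 1 := finrank_span_singleton hg
    have h2 : Module.finrank ℝ (EuclideanSpace ℝ (Fin n)) = n := finrank_euclideanSpace_fin
    rw [htop, finrank_top, h2] at h1
    omega
  have hwg : (inner ℝ w g : ℝ) = 0 := real_inner_comm g w ▸ hwmem g (Submodule.mem_span_singleton_self g)
  have hgn : (0:ℝ) < ‖g‖ := norm_pos_iff.mpr hg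
  have hwn : (0:ℝ) < ‖w‖ := norm_pos_iff.mpr hw0
  -- radial unboundedness: get R such that V ≥ c+1 outside closedBall 0 R
  obtain ⟨K, hK, hKsub⟩ := (hasBasis_cocompact.eventually_iff).mp
    (hVrad.eventually (eventually_ge_atTop (c + 1)))
  obtain ⟨R, hR0, hKR⟩ : ∃ R : ℝ, 0 ≤ R ∧ K ⊆ Metric.closedBall 0 R := by
    obtain ⟨R, hKR⟩ := hK.isBounded.subset_closedBall 0
    exact ⟨max R 0, le_max_right _ _,
      hKR.trans (Metric.closedBall_subset_closedBall (le_max_left _ _))⟩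
  have hbig : ∀ x : EuclideanSpace ℝ (Fin n), R < ‖x‖ → c + 1 ≤ V x := by
    intro x hx
    refine hKsub fun hxK => ?_
    have := hKR hxK
    rw [Metric.mem_closedBall, dist_zero_right] at this
    linarith
  -- Pythagoras-type norm bounds on the plane spanned by w, g
  have hnormsq : ∀ s t : ℝ, ‖s • w + t • g‖ ^ 2 = s ^ 2 * ‖w‖ ^ 2 + t ^ 2 * ‖g‖ ^ 2 := by
    intro s t
    have hinner : (inner ℝ (s • w) (t • g) : ℝ) = 0 := by
      rw [real_inner_smul_left, real_inner_smul_right, hwg]; ring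
    rw [norm_add_sq_real, hinner, norm_smul, norm_smul]
    simp [mul_pow, mul_comm]
  have hnt : ∀ s t : ℝ, |t| * ‖g‖ ≤ ‖s • w + t • g‖ := by
    intro s t
    have h := hnormsq s t
    nlinarith [norm_nonneg (s • w + t • g), abs_nonneg t, sq_abs t, norm_nonneg g,
      sq_nonneg s, sq_nonneg (s * ‖w‖), norm_nonneg w]
  have hns : ∀ s t : ℝ, |s| * ‖w‖ ≤ ‖s • w + t • g‖ := by
    intro s t
    have h := hnormsq s t
    nlinarith [norm_nonneg (s • w + t • g), abs_nonneg s, sq_abs s, norm_nonneg w,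
      sq_nonneg (t * ‖g‖)]
  set T : ℝ := (R + 1) / ‖g‖ with hTdef
  have hT0 : 0 < T := by positivity
  have hTg : T * ‖g‖ = R + 1 := by rw [hTdef]; field_simp
  -- the parametric minimum over the segment
  set f : ℝ → ℝ → ℝ := fun s t => V (s • w + t • g) with hfdef
  have hfc : Continuous ↿f := by
    apply hVc.comp
    exact (continuous_fst.smul continuous_const).add (continuous_snd.smul continuous_const)
  set m : ℝ → ℝ := fun s => sInf (f s '' Icc (-T) T) with hmdef
  have hmc : Continuous m := isCompact_Icc.continuous_sInf hfc
  have hIcc_ne : (Icc (-T) T).Nonempty := ⟨0, by constructor <;> linarith⟩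
  have hfscont : ∀ s : ℝ, Continuous (f s) := fun s =>
    hVc.comp ((continuous_const).add (continuous_id.smul continuous_const))
  have hm0 : m 0 ≤ 0 := by
    have h0mem : (0:ℝ) ∈ Icc (-T) T := ⟨by linarith, by linarith⟩
    have : f 0 0 = 0 := by simp [hfdef, hV0]
    calc m 0 ≤ f 0 0 := csInf_le (isCompact_Icc.bddBelow_image (hfscont 0).continuousOn)
          (mem_image_of_mem _ h0mem)
      _ = 0 := this
  set s1 : ℝ := (R + 1) / ‖w‖ with hs1def
  have hs1 : 0 ≤ s1 := by positivity
  have hms1 : c + 1 ≤ m s1 := by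
    apply le_csInf (hIcc_ne.image _)
    rintro b ⟨t, _, rfl⟩
    apply hbig
    have h1 : |s1| * ‖w‖ = R + 1 := by
      rw [abs_of_nonneg hs1, hs1def]; field_simp
    have := hns s1 t
    rw [h1] at this
    linarith
  -- IVT
  have hcmem : c ∈ Icc (m 0) (m s1) := ⟨by linarith, by linarith⟩
  obtain ⟨s0, _, hms0⟩ := intermediate_value_Icc hs1 hmc.continuousOn hcmem
  -- the minimum on the segment is attained
  obtain ⟨t0, ht0mem, ht0min⟩ :=
    isCompact_Icc.exists_isMinOn hIcc_ne (hfscont s0).continuousOn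
  have hinf : f s0 t0 = c := by
    rw [← hms0, hmdef]
    exact (IsLeast.csInf_eq ⟨mem_image_of_mem _ ht0mem, fun b ⟨t, ht, hbt⟩ =>
      hbt ▸ ht0min ht⟩).symm
  set x0 : EuclideanSpace ℝ (Fin n) := s0 • w + t0 • g with hx0def
  have hVx0 : V x0 = c := hinf
  -- t0 is interior to the segment
  have ht0int : t0 ∈ Ioo (-T) T := by
    rcases ht0mem with ⟨h1, h2⟩
    constructor
    · rcases lt_or_eq_of_le h1 with h | h
      · exact h
      · exfalso
        have habs : |t0| = T := by rw [← h, abs_of_nonpos (by linarith), neg_neg]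
        have := hnt s0 t0
        rw [habs, hTg] at this
        have := hbig x0 (by simpa [hx0def] using lt_of_lt_of_le (by linarith) this)
        linarith [hVx0 ▸ this]
    · rcases lt_or_eq_of_le h2 with h | h
      · exact h
      · exfalso
        have habs : |t0| = T := by rw [h, abs_of_nonneg (by linarith)]
        have := hnt s0 t0
        rw [habs, hTg] at this
        have := hbig x0 (by simpa [hx0def] using lt_of_lt_of_le (by linarith) this)
        linarith [hVx0 ▸ this]
  have hloc : IsLocalMin (f s0) t0 :=
    ht0min.isLocalMin (Icc_mem_nhds ht0int.1 ht0int.2)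
  -- derivative of f s0 at t0 equals ⟪∇V x0, g⟫
  have hline : HasDerivAt (fun t : ℝ => s0 • w + t • g) g t0 := by
    simpa using ((hasDerivAt_id t0).smul_const g).const_add (s0 • w)
  have hVd : HasFDerivAt V (fderiv ℝ V x0) x0 :=
    (hV_smooth.differentiable (by simp) x0).hasFDerivAt
  have hderiv : HasDerivAt (f s0) (fderiv ℝ V x0 g) t0 := by
    exact hVd.comp_hasDerivAt t0 hline
  have hzero : fderiv ℝ V x0 g = 0 := hloc.hasDerivAt_eq_zero hderiv
  refine ⟨x0, hVx0, ?_⟩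
  rw [show gradient V x0 = (InnerProductSpace.toDual ℝ (EuclideanSpace ℝ (Fin n))).symm (fderiv ℝ V x0) from rfl,
    InnerProductSpace.toDual_symm_apply, hzero]
end

section
/- Let n ≥ 2, let F : ℝⁿ → ℝⁿ be a continuous vector field, and let V : ℝⁿ → ℝ be a smooth Lyapunov function for F with respect to the origin. Then the normalized negative gradient of V along any nontrivial level set hits every direction: for every c > 0 and every v ∈ ℝⁿ with ‖v‖ = 1 there exists x ∈ ℝⁿ with V(x) = c, ∇V(x) ≠ 0, and -∇V(x)/‖∇V(x)‖ = v. -/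
open Filter

private lemma deriv_along_line {E : Type*} [NormedAddCommGroup E] [InnerProductSpace ℝ E]
    [CompleteSpace E] (V : E → ℝ) (h : ContDiff ℝ (⊤ : ℕ∞) V) (x w : E) :
    HasDerivAt (fun t : ℝ => V (x + t • w)) (inner ℝ (gradient V x) w : ℝ) 0 := by
  have hg : HasGradientAt V (gradient V x) x := (h.differentiable (by simp) x).hasGradientAt
  have hfd' : HasFDerivAt V ((InnerProductSpace.toDual ℝ E) (gradient V x)) (x + (0:ℝ) • w) := by
    simpa using hg.hasFDerivAt
  have hline : HasDerivAt (fun t : ℝ => x + t • w) w 0 := by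
    simpa using ((hasDerivAt_id (0:ℝ)).smul_const w).const_add x
  have hc := hfd'.comp_hasDerivAt (0:ℝ) hline
  exact hc

/-- The normalized negative gradient of a smooth Lyapunov function along any
nontrivial level set hits every direction of the unit sphere. -/
theorem levelset_normalized_gradient_surjective
    (n : ℕ) (hn : 2 ≤ n)
    (F : EuclideanSpace ℝ (Fin n) → EuclideanSpace ℝ (Fin n)) (hF : Continuous F)
    (V : EuclideanSpace ℝ (Fin n) → ℝ)
    (hV_smooth : ContDiff ℝ (⊤ : ℕ∞) V)
    (hV0 : V 0 = 0)
    (hVpos : ∀ x : EuclideanSpace ℝ (Fin n), x ≠ 0 → 0 < V x)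
    (hVdec : ∀ x : EuclideanSpace ℝ (Fin n), x ≠ 0 →
      (inner ℝ (gradient V x) (F x) : ℝ) < 0)
    (hVrad : Tendsto V (cocompact (EuclideanSpace ℝ (Fin n))) atTop)
    (c : ℝ) (hc : 0 < c)
    (v : EuclideanSpace ℝ (Fin n)) (hv : ‖v‖ = 1) :
    ∃ x : EuclideanSpace ℝ (Fin n), V x = c ∧ gradient V x ≠ 0 ∧
      ‖gradient V x‖⁻¹ • (-(gradient V x)) = v := by
  have hVc : Continuous V := hV_smooth.continuous
  set K : Set (EuclideanSpace ℝ (Fin n)) := {x | V x ≤ c} with hK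
  -- K is compact
  have hKclosed : IsClosed K := isClosed_le hVc continuous_const
  have hKcompact : IsCompact K := by
    have hmem : V ⁻¹' Set.Ici (c + 1) ∈ cocompact (EuclideanSpace ℝ (Fin n)) :=
      hVrad (Ici_mem_atTop (c + 1))
    obtain ⟨K₀, hK₀c, hsub⟩ := mem_cocompact.mp hmem
    refine hK₀c.of_isClosed_subset hKclosed ?_
    intro x hx
    by_contra hxK
    have h1 : c + 1 ≤ V x := hsub hxK
    have h2 : V x ≤ c := hx
    linarith
  -- minimize ⟨v, ·⟩ on K
  have hKne : K.Nonempty := ⟨0, by simp only [hK, Set.mem_setOf_eq, hV0]; linarith⟩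
  obtain ⟨x₀, hx₀K, hmin⟩ := hKcompact.exists_isMinOn hKne
    (((continuous_const.inner continuous_id) :
      Continuous fun x : EuclideanSpace ℝ (Fin n) => (inner ℝ v x : ℝ)).continuousOn)
  have hx₀K' : V x₀ ≤ c := hx₀K
  -- the minimizer is on the level set
  have hVx₀ : V x₀ = c := by
    by_contra hne
    have hlt : V x₀ < c := lt_of_le_of_ne hx₀K' hne
    have hcont : ContinuousAt (fun t : ℝ => V (x₀ - t • v)) 0 :=
      (hVc.comp (continuous_const.sub (continuous_id.smul continuous_const))).continuousAt
    have hev : ∀ᶠ t : ℝ in nhds 0, V (x₀ - t • v) < c := by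
      exact hcont.eventually_lt continuousAt_const (by simpa using hlt)
    obtain ⟨t, htV, ht0⟩ := ((hev.filter_mono nhdsWithin_le_nhds).and
      (eventually_mem_nhdsWithin (s := Set.Ioi (0:ℝ)))).exists
    have htpos : (0:ℝ) < t := ht0
    have hmem : x₀ - t • v ∈ K := le_of_lt htV
    have hle : (inner ℝ v x₀ : ℝ) ≤ inner ℝ v (x₀ - t • v) := hmin hmem
    have hinner : (inner ℝ v (x₀ - t • v) : ℝ) = inner ℝ v x₀ - t := by
      rw [inner_sub_right, real_inner_smul_right, real_inner_self_eq_norm_sq, hv]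
      ring
    rw [hinner] at hle
    linarith
  have hx₀ne : x₀ ≠ 0 := by
    intro h; rw [h, hV0] at hVx₀; linarith
  set g : EuclideanSpace ℝ (Fin n) := gradient V x₀ with hg
  have hgne : g ≠ 0 := by
    intro h0
    have hdec := hVdec x₀ hx₀ne
    rw [← hg, h0, inner_zero_left] at hdec
    linarith
  have hgnorm : (0:ℝ) < ‖g‖ ^ 2 := pow_pos (norm_pos_iff.mpr hgne) 2
  -- variational inequality, strict form
  have key : ∀ w : EuclideanSpace ℝ (Fin n), (inner ℝ g w : ℝ) < 0 → 0 ≤ (inner ℝ v w : ℝ) := by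
    intro w hw
    have hder := deriv_along_line V hV_smooth x₀ w
    rw [hasDerivAt_iff_tendsto_slope] at hder
    have hslope : ∀ᶠ t in nhdsWithin (0:ℝ) {0}ᶜ,
        slope (fun t : ℝ => V (x₀ + t • w)) 0 t < 0 :=
      hder.eventually_lt_const hw
    have hslope' : ∀ᶠ t in nhdsWithin (0:ℝ) (Set.Ioi 0),
        slope (fun t : ℝ => V (x₀ + t • w)) 0 t < 0 :=
      hslope.filter_mono (nhdsWithin_mono 0 (fun t ht => ne_of_gt ht))
    obtain ⟨t, hts, ht0⟩ := (hslope'.and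
      (eventually_mem_nhdsWithin (s := Set.Ioi (0:ℝ)))).exists
    have htpos : (0:ℝ) < t := ht0
    have hVlt : V (x₀ + t • w) < V x₀ := by
      rw [slope_def_field] at hts
      have h2 : (V (x₀ + t • w) - V (x₀ + (0:ℝ) • w)) / (t - 0) < 0 := by
        simpa [div_eq_inv_mul] using hts
      simp only [zero_smul, add_zero, sub_zero] at h2
      rcases div_neg_iff.mp h2 with ⟨ha, _⟩ | ⟨_, hb⟩
      · linarith
      · linarith
    have hmem : x₀ + t • w ∈ K := by
      have : V (x₀ + t • w) < c := by rw [← hVx₀]; exact hVlt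
      exact this.le
    have hle : (inner ℝ v x₀ : ℝ) ≤ inner ℝ v (x₀ + t • w) := hmin hmem
    rw [inner_add_right, real_inner_smul_right] at hle
    nlinarith
  -- extend to non-strict form
  have key' : ∀ w : EuclideanSpace ℝ (Fin n), (inner ℝ g w : ℝ) ≤ 0 → 0 ≤ (inner ℝ v w : ℝ) := by
    intro w hw
    have h1 : ∀ ε : ℝ, 0 < ε → ε * (inner ℝ v g : ℝ) ≤ (inner ℝ v w : ℝ) := by
      intro ε hε
      have hgw : (inner ℝ g (w - ε • g) : ℝ) < 0 := by
        rw [inner_sub_right, real_inner_smul_right, real_inner_self_eq_norm_sq]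
        nlinarith
      have h2 := key _ hgw
      rw [inner_sub_right, real_inner_smul_right] at h2
      linarith
    have htend : Tendsto (fun ε : ℝ => ε * (inner ℝ v g : ℝ)) (nhdsWithin 0 (Set.Ioi 0))
        (nhds 0) := by
      have h3 := (continuous_mul_right (inner ℝ v g : ℝ)).tendsto 0
      simpa using h3.mono_left nhdsWithin_le_nhds
    exact le_of_tendsto htend (eventually_nhdsWithin_of_forall fun ε hε => h1 ε hε)
  -- v = α • g with α < 0
  set α : ℝ := (inner ℝ g v : ℝ) / ‖g‖ ^ 2 with hα
  set p : EuclideanSpace ℝ (Fin n) := v - α • g with hp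
  have hgp : (inner ℝ g p : ℝ) = 0 := by
    rw [hp, inner_sub_right, real_inner_smul_right, real_inner_self_eq_norm_sq, hα]
    field_simp
    ring
  have hpzero : p = 0 := by
    have h1 := key' (-p) (by rw [inner_neg_right, hgp]; simp)
    rw [inner_neg_right] at h1
    have hvp : (inner ℝ v p : ℝ) = ‖p‖ ^ 2 := by
      have hdecomp : v = α • g + p := by rw [hp]; abel
      rw [hdecomp, inner_add_left, real_inner_smul_left, hgp,
        real_inner_self_eq_norm_sq]
      ring
    have h2 : ‖p‖ ^ 2 ≤ 0 := by rw [← hvp]; linarith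
    have h3 : ‖p‖ = 0 := by nlinarith [norm_nonneg p]
    exact norm_eq_zero.mp h3
  have hveq : v = α • g := by
    have h4 := hpzero; rw [hp, sub_eq_zero] at h4; exact h4
  have hαneg : α < 0 := by
    have h1 := key (-g) (by rw [inner_neg_right, real_inner_self_eq_norm_sq]; linarith)
    rw [inner_neg_right, hveq, real_inner_smul_left, real_inner_self_eq_norm_sq] at h1
    have hαle : α ≤ 0 := by nlinarith
    rcases lt_or_eq_of_le hαle with h | h
    · exact h
    · exfalso
      rw [h, zero_smul] at hveq
      rw [hveq, norm_zero] at hv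
      linarith
  refine ⟨x₀, hVx₀, hgne, ?_⟩
  have hnormg : ‖g‖ = -α⁻¹ := by
    have h1 : ‖v‖ = ‖α‖ * ‖g‖ := by rw [hveq, norm_smul]
    rw [hv, Real.norm_eq_abs, abs_of_neg hαneg] at h1
    have h2 : (-α) * ‖g‖ = 1 := h1.symm
    have h3 : ‖g‖ = (-α)⁻¹ := eq_inv_of_mul_eq_one_left (by linarith [h2] <;> ring_nf)
    rw [h3, inv_neg]
  rw [← hg, hnormg, hveq, inv_neg, inv_inv, neg_smul, smul_neg, neg_neg]
end

section
/- Let 1 ≤ m < n and fix constant vectors g₁, …, g_m ∈ ℝⁿ. Then the driftless control system ẋ = Σᵢ gᵢ uᵢ admits no smooth control Lyapunov function with respect to the origin: there is no C^∞ function V : ℝⁿ → ℝ with V(0) = 0, V(x) > 0 for all x ≠ 0, V radially unbounded, and such that for every x ≠ 0 there exists u ∈ ℝᵐ with ⟨∇V(x), Σᵢ uᵢ gᵢ⟩ < 0. -/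
open Filter

open Topology

/-- For `1 ≤ m < n` and fixed vectors `g₁, …, g_m ∈ ℝⁿ`, the driftless
control system `ẋ = Σᵢ gᵢ uᵢ` admits no smooth control Lyapunov function w.r.t. the origin. -/
theorem no_smooth_CLF_driftless
    (n m : ℕ) (hm : 1 ≤ m) (hmn : m < n)
    (g : Fin m → EuclideanSpace ℝ (Fin n)) :
    ¬ ∃ V : EuclideanSpace ℝ (Fin n) → ℝ,
      ContDiff ℝ (⊤ : ℕ∞) V ∧
      V 0 = 0 ∧
      (∀ x : EuclideanSpace ℝ (Fin n), x ≠ 0 → 0 < V x) ∧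
      Tendsto V (cocompact (EuclideanSpace ℝ (Fin n))) atTop ∧
      (∀ x : EuclideanSpace ℝ (Fin n), x ≠ 0 → ∃ u : Fin m → ℝ,
        (inner ℝ (gradient V x) (∑ i, u i • g i) : ℝ) < 0) := by
  rintro ⟨V, hV, hV0, hVpos, hVrad, hCLF⟩
  -- a nonzero vector orthogonal to all `g i`
  obtain ⟨w, hwmem, hw0⟩ :
      ∃ w ∈ (Submodule.span ℝ (Set.range g))ᗮ, w ≠ 0 := by
    by_contra h
    push_neg at h
    have hbot : (Submodule.span ℝ (Set.range g))ᗮ = ⊥ := by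
      rw [Submodule.eq_bot_iff]; exact h
    rw [Submodule.orthogonal_eq_bot_iff] at hbot
    have := finrank_le_of_span_eq_top hbot
    simp [finrank_euclideanSpace] at this
    omega
  have hgw : ∀ i, (inner ℝ (g i) w : ℝ) = 0 := fun i =>
    hwmem (g i) (Submodule.subset_span ⟨i, rfl⟩)
  have hww : (0:ℝ) < inner ℝ w w := by
    rcases lt_or_eq_of_le (real_inner_self_nonneg (x := w)) with h | h
    · exact h
    · exact absurd (inner_self_eq_zero.mp h.symm) hw0
  -- the sublevel set K = {V ≤ 1} is compact
  set K : Set (EuclideanSpace ℝ (Fin n)) := V ⁻¹' Set.Iic 1 with hK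
  have hKclosed : IsClosed K := isClosed_Iic.preimage hV.continuous
  have hKcompact : IsCompact K := by
    obtain ⟨t, htc, hts⟩ := mem_cocompact.mp (hVrad (Ioi_mem_atTop 1))
    refine htc.of_isClosed_subset hKclosed fun x hx => ?_
    by_contra hxt
    have h1 : V x ∈ Set.Ioi 1 := hts hxt
    have h2 : V x ≤ 1 := hx
    simp only [Set.mem_Ioi] at h1
    linarith
  have h0K : (0 : EuclideanSpace ℝ (Fin n)) ∈ K := by
    simp only [hK, Set.mem_preimage, hV0, Set.mem_Iic]
    norm_num
  -- maximize f x = ⟪x, w⟫ on K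
  set f : EuclideanSpace ℝ (Fin n) → ℝ := fun x => (inner ℝ x w : ℝ) with hf
  have hfc : Continuous f := continuous_id.inner continuous_const
  obtain ⟨z, hzK, hzmax⟩ := hKcompact.exists_isMaxOn ⟨0, h0K⟩ hfc.continuousOn
  -- f z > 0, hence z ≠ 0
  have hfz : 0 < f z := by
    have hct : Tendsto (fun t : ℝ => V (t • w)) (𝓝 0) (𝓝 0) := by
      have hc : Continuous fun t : ℝ => V (t • w) :=
        hV.continuous.comp (continuous_id.smul continuous_const)
      have := hc.continuousAt (x := (0:ℝ))
      simpa [ContinuousAt, hV0] using this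
    have hev : ∀ᶠ t : ℝ in 𝓝[>] 0, V (t • w) < 1 :=
      ((hct.eventually_lt_const zero_lt_one).filter_mono nhdsWithin_le_nhds)
    obtain ⟨t₀, ht₀V, ht₀⟩ := (hev.and self_mem_nhdsWithin).exists
    have hmem : (t₀ • w) ∈ K := le_of_lt ht₀V
    have hle := hzmax hmem
    have heq : f (t₀ • w) = t₀ * inner ℝ w w := real_inner_smul_left w w t₀
    have hle' : t₀ * inner ℝ w w ≤ f z := heq ▸ hle
    nlinarith [mul_pos (Set.mem_Ioi.mp ht₀) hww]
  have hz0 : z ≠ 0 := by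
    rintro rfl
    have : f 0 = 0 := inner_zero_left w
    rw [this] at hfz
    exact lt_irrefl 0 hfz
  -- CLF condition at z
  obtain ⟨u, hu⟩ := hCLF z hz0
  set d : EuclideanSpace ℝ (Fin n) := ∑ i, u i • g i with hd
  have hdw : (inner ℝ d w : ℝ) = 0 := by
    rw [hd, sum_inner]
    rw [Finset.sum_eq_zero]
    intro i _
    rw [real_inner_smul_left, hgw, mul_zero]
  set a : ℝ := inner ℝ (gradient V z) d with ha
  have haneg : a < 0 := hu
  set b : ℝ := inner ℝ (gradient V z) w with hb
  set ε : ℝ := -a / (2 * (|b| + 1)) with hε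
  have hεpos : 0 < ε := by
    apply div_pos (by linarith)
    nlinarith [abs_nonneg b]
  set e : EuclideanSpace ℝ (Fin n) := d + ε • w with he
  have hVe : (inner ℝ (gradient V z) e : ℝ) < 0 := by
    have h1 : (inner ℝ (gradient V z) e : ℝ) = a + ε * b := by
      rw [he, inner_add_right, real_inner_smul_right, ha, hb]
    have h2 : ε * b ≤ ε * |b| :=
      mul_le_mul_of_nonneg_left (le_abs_self b) hεpos.le
    have h3 : ε * |b| < -a / 2 := by
      rw [hε, div_mul_eq_mul_div,
        div_lt_div_iff₀ (by nlinarith [abs_nonneg b]) (by norm_num)]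
      nlinarith [abs_nonneg b]
    linarith
  have hew : (0:ℝ) < inner ℝ e w := by
    have heq : (inner ℝ e w : ℝ) = ε * inner ℝ w w := by
      rw [he, inner_add_left, real_inner_smul_left, hdw, zero_add]
    rw [heq]; positivity
  -- derivative of t ↦ V (z + t • e) at 0
  have hdiff : DifferentiableAt ℝ V z := (hV.differentiable (by simp)).differentiableAt
  have hz' : z + (0:ℝ) • e = z := by rw [zero_smul, add_zero]
  have hfd : HasFDerivAt V
      ((InnerProductSpace.toDual ℝ (EuclideanSpace ℝ (Fin n))) (gradient V z))
      (z + (0:ℝ) • e) := by rw [hz']; exact hdiff.hasGradientAt.hasFDerivAt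
  have hline : HasDerivAt (fun t : ℝ => z + t • e) e 0 := by
    simpa using ((hasDerivAt_id (0:ℝ)).smul_const e).const_add z
  have hφ : HasDerivAt (fun t : ℝ => V (z + t • e)) (inner ℝ (gradient V z) e : ℝ) 0 := by
    have h := hfd.comp_hasDerivAt 0 hline
    simp only [InnerProductSpace.toDual_apply_apply] at h; exact h
  have hslope := hasDerivAt_iff_tendsto_slope.mp hφ
  have hslope' : Tendsto (slope (fun t : ℝ => V (z + t • e)) 0) (𝓝[>] 0)
      (𝓝 (inner ℝ (gradient V z) e : ℝ)) :=
    hslope.mono_left (nhdsWithin_mono _ fun t ht => ne_of_gt ht)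
  obtain ⟨t, hts, htmem⟩ :=
    ((hslope'.eventually_lt_const hVe).and self_mem_nhdsWithin).exists
  have htpos : (0:ℝ) < t := htmem
  have hVlt : V (z + t • e) < V z := by
    have hdiv := hts
    rw [slope_def_field] at hdiv
    simp only [zero_smul, add_zero, sub_zero] at hdiv
    rcases div_neg_iff.mp hdiv with ⟨h1, h2⟩ | ⟨h1, h2⟩
    · linarith
    · linarith
  have hmemK : z + t • e ∈ K := by
    have hzK1 : V z ≤ 1 := hzK
    exact le_of_lt (lt_of_lt_of_le hVlt hzK1)
  have hle : f (z + t • e) ≤ f z := hzmax hmemK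
  have hcontra : f (z + t • e) = f z + t * inner ℝ e w := by
    show (inner ℝ (z + t • e) w : ℝ) = inner ℝ z w + t * inner ℝ e w
    rw [inner_add_left, real_inner_smul_left]
  rw [hcontra] at hle
  nlinarith [mul_pos htpos hew]
end

section
/- Let F : ℝⁿ → ℝⁿ be a continuous vector field and let V : ℝⁿ → ℝ be a convex smooth Lyapunov function for F with respect to the origin. Then for every s ∈ [0,1] and every x ≠ 0, ⟨∇V(x), s·F(x) - (1-s)·x⟩ < 0; that is, V is a smooth Lyapunov function for each vector field x ↦ s F(x) - (1-s) x on the straight-line homotopy between F and -id, so the origin remains globally asymptotically stable, as certified by V, throughout the homotopy. -/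
open Filter

/-- A convex smooth Lyapunov function `V` for `F` (w.r.t. the origin) is a
Lyapunov function for every vector field `x ↦ s • F x - (1-s) • x` on the straight-line
homotopy between `F` and `-id`. -/
theorem convex_lyapunov_straight_line_homotopy
    (n : ℕ)
    (F : EuclideanSpace ℝ (Fin n) → EuclideanSpace ℝ (Fin n)) (hF : Continuous F)
    (V : EuclideanSpace ℝ (Fin n) → ℝ)
    (hV_smooth : ContDiff ℝ (⊤ : ℕ∞) V)
    (hV_convex : ConvexOn ℝ Set.univ V)
    (hV0 : V 0 = 0)
    (hVpos : ∀ x : EuclideanSpace ℝ (Fin n), x ≠ 0 → 0 < V x)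
    (hVdec : ∀ x : EuclideanSpace ℝ (Fin n), x ≠ 0 →
      (inner ℝ (gradient V x) (F x) : ℝ) < 0)
    (hVrad : Tendsto V (cocompact (EuclideanSpace ℝ (Fin n))) atTop) :
    ∀ s ∈ Set.Icc (0:ℝ) 1, ∀ x : EuclideanSpace ℝ (Fin n), x ≠ 0 →
      (inner ℝ (gradient V x) (s • F x - (1 - s) • x) : ℝ) < 0 := by
  intro s hs x hx
  obtain ⟨hs0, hs1⟩ := hs
  -- V is differentiable, with gradient
  have hdiff : DifferentiableAt ℝ V x := (hV_smooth.differentiable (by simp)) x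
  have hgrad : HasGradientAt V (gradient V x) x := hdiff.hasGradientAt
  -- the curve φ t = V (x + t • (-x))
  set φ : ℝ → ℝ := fun t => V (x + t • (-x)) with hφdef
  have hcurve : HasDerivAt (fun t : ℝ => x + t • (-x)) (-x) 0 := by
    simpa using ((hasDerivAt_id (0:ℝ)).smul_const (-x)).const_add x
  have hφ : HasDerivAt φ (inner ℝ (gradient V x) (-x) : ℝ) 0 := by
    have hgrad' : HasFDerivAt V ((InnerProductSpace.toDual ℝ (EuclideanSpace ℝ (Fin n)))
        (gradient V x)) ((fun t : ℝ => x + t • (-x)) 0) := by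
      simpa using hgrad.hasFDerivAt
    have := hgrad'.comp_hasDerivAt 0 hcurve
    simpa [hφdef, Function.comp_def] using this
  -- slope bound from convexity: for 0 < t ≤ 1, slope φ 0 t ≤ - V x
  have hslope : ∀ t : ℝ, t ∈ Set.Ioo (0:ℝ) 1 → slope φ 0 t ≤ -V x := by
    intro t ht
    have hconv := hV_convex.2 (Set.mem_univ x) (Set.mem_univ (0:EuclideanSpace ℝ (Fin n)))
      (by linarith [ht.1, ht.2] : (0:ℝ) ≤ 1 - t) (le_of_lt ht.1) (by ring)
    have hval : φ t ≤ (1 - t) * V x := by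
      have : x + t • (-x) = (1 - t) • x + t • (0:EuclideanSpace ℝ (Fin n)) := by
        module
      rw [hφdef]; simp only [this]
      simpa [hV0] using hconv
    have hφ0 : φ 0 = V x := by simp [hφdef]
    rw [slope_def_field, sub_zero, div_le_iff₀ ht.1]
    -- φ t - φ 0 ≤ -V x * t
    have : φ t - φ 0 ≤ -t * V x := by rw [hφ0]; nlinarith
    linarith
  -- derivative is the limit of slopes from the right
  have htend : Tendsto (slope φ 0) (nhdsWithin 0 (Set.Ioi 0))
      (nhds (inner ℝ (gradient V x) (-x) : ℝ)) :=
    (hasDerivAt_iff_tendsto_slope.mp hφ).mono_left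
      (nhdsWithin_mono _ (fun y hy => ne_of_gt hy))
  have hkey : (inner ℝ (gradient V x) (-x) : ℝ) ≤ -V x := by
    refine le_of_tendsto htend ?_
    filter_upwards [Ioo_mem_nhdsGT_of_mem (by norm_num : (0:ℝ) ∈ Set.Ico 0 1)] with t ht
    exact hslope t ht
  have hVx : 0 < V x := hVpos x hx
  have hx_inner : 0 < (inner ℝ (gradient V x) x : ℝ) := by
    have : -(inner ℝ (gradient V x) x : ℝ) ≤ -V x := by
      simpa [inner_neg_right] using hkey
    linarith
  have hFx : (inner ℝ (gradient V x) (F x) : ℝ) < 0 := hVdec x hx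
  have hexpand : (inner ℝ (gradient V x) (s • F x - (1 - s) • x) : ℝ)
      = s * inner ℝ (gradient V x) (F x) - (1 - s) * inner ℝ (gradient V x) x := by
    rw [inner_sub_right, real_inner_smul_right, real_inner_smul_right]
  rw [hexpand]
  rcases eq_or_lt_of_le hs0 with h | h
  · rw [← h]; simpa using hx_inner
  · nlinarith
end

section
/- Let F₁, F₂ : ℝⁿ → ℝⁿ be continuous vector fields and let V₁, V₂ : ℝⁿ → ℝ be (possibly different) convex smooth Lyapunov functions for F₁ and F₂ respectively with respect to the origin. Define H : [0,1] × ℝⁿ → ℝⁿ by H(s,x) = -2s·x + (1-2s)·F₁(x) for s ∈ [0,1/2] and H(s,x) = -(2-2s)·x + (2s-1)·F₂(x) for s ∈ (1/2,1]. Then H is continuous, H(0,·) = F₁, H(1,·) = F₂, and for every s ∈ [0,1/2] one has ⟨∇V₁(x), H(s,x)⟩ < 0 for all x ≠ 0, while for every s ∈ [1/2,1] one has ⟨∇V₂(x), H(s,x)⟩ < 0 for all x ≠ 0. In particular F₁ and F₂ are homotopic through vector fields for which the origin is globally asymptotically stable as certified by a smooth Lyapunov function. -/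
open Filter

lemma grad_inner_self_key {n : ℕ} (V : EuclideanSpace ℝ (Fin n) → ℝ)
    (hsm : ContDiff ℝ (⊤ : ℕ∞) V) (hcv : ConvexOn ℝ Set.univ V) (hV0 : V 0 = 0)
    (x : EuclideanSpace ℝ (Fin n)) :
    V x ≤ (inner ℝ (gradient V x) x : ℝ) := by
  set g : ℝ → ℝ := fun t => V (t • x) with hg
  have hgc : ConvexOn ℝ Set.univ g := by
    have := hcv.comp_affineMap (AffineMap.lineMap (0 : EuclideanSpace ℝ (Fin n)) x)
    have heq : (V ∘ (AffineMap.lineMap (0 : EuclideanSpace ℝ (Fin n)) x)) = g := by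
      funext t; simp [g, AffineMap.lineMap_apply]
    rw [heq] at this
    simpa using this
  have hderiv : ∀ t : ℝ, HasDerivAt g (inner ℝ (gradient V (t • x)) x : ℝ) t := by
    intro t
    have hdV : DifferentiableAt ℝ V (t • x) := (hsm.differentiable (by simp)).differentiableAt
    have hgr : HasFDerivAt V ((InnerProductSpace.toDual ℝ _) (gradient V (t • x))) (t • x) :=
      hasGradientAt_iff_hasFDerivAt.mp hdV.hasGradientAt
    have hline : HasDerivAt (fun t : ℝ => t • x) x t := by
      simpa using (hasDerivAt_id t).smul_const x
    have := hgr.comp_hasDerivAt t hline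
    exact this
  have hslope := hgc.slope_le_of_hasDerivAt (Set.mem_univ (0:ℝ)) (Set.mem_univ (1:ℝ))
    one_pos (hderiv 1)
  have : slope g 0 1 = V x := by
    simp [slope_def_field, g, hV0]
  rw [this] at hslope
  simpa using hslope

/-- Two vector fields `F₁, F₂`, each admitting a convex smooth Lyapunov
function w.r.t. the origin, are homotopic via the concatenated straight-line homotopy
`H` (through `-id`), which is continuous on `[0,1] × ℝⁿ`, agrees with `F₁` at `s = 0` and
with `F₂` at `s = 1`, and along which the origin remains globally asymptotically stable,
as certified by `V₁` on `[0,1/2]` and by `V₂` on `[1/2,1]`. -/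
theorem convex_lyapunov_homotopy_between_two_fields
    (n : ℕ)
    (F₁ F₂ : EuclideanSpace ℝ (Fin n) → EuclideanSpace ℝ (Fin n))
    (hF₁ : Continuous F₁) (hF₂ : Continuous F₂)
    (V₁ V₂ : EuclideanSpace ℝ (Fin n) → ℝ)
    (hV₁_smooth : ContDiff ℝ (⊤ : ℕ∞) V₁) (hV₂_smooth : ContDiff ℝ (⊤ : ℕ∞) V₂)
    (hV₁_convex : ConvexOn ℝ Set.univ V₁) (hV₂_convex : ConvexOn ℝ Set.univ V₂)
    (hV₁0 : V₁ 0 = 0) (hV₂0 : V₂ 0 = 0)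
    (hV₁pos : ∀ x : EuclideanSpace ℝ (Fin n), x ≠ 0 → 0 < V₁ x)
    (hV₂pos : ∀ x : EuclideanSpace ℝ (Fin n), x ≠ 0 → 0 < V₂ x)
    (hV₁dec : ∀ x : EuclideanSpace ℝ (Fin n), x ≠ 0 →
      (inner ℝ (gradient V₁ x) (F₁ x) : ℝ) < 0)
    (hV₂dec : ∀ x : EuclideanSpace ℝ (Fin n), x ≠ 0 →
      (inner ℝ (gradient V₂ x) (F₂ x) : ℝ) < 0)
    (hV₁rad : Tendsto V₁ (cocompact (EuclideanSpace ℝ (Fin n))) atTop)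
    (hV₂rad : Tendsto V₂ (cocompact (EuclideanSpace ℝ (Fin n))) atTop)
    (H : ℝ → EuclideanSpace ℝ (Fin n) → EuclideanSpace ℝ (Fin n))
    (hH : ∀ s x, H s x =
      if s ≤ 1/2 then (-(2*s)) • x + (1 - 2*s) • F₁ x
      else (-(2 - 2*s)) • x + (2*s - 1) • F₂ x) :
    ContinuousOn (fun p : ℝ × EuclideanSpace ℝ (Fin n) => H p.1 p.2)
      (Set.Icc (0:ℝ) 1 ×ˢ Set.univ) ∧
    (∀ x, H 0 x = F₁ x) ∧ (∀ x, H 1 x = F₂ x) ∧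
    (∀ s ∈ Set.Icc (0:ℝ) (1/2), ∀ x : EuclideanSpace ℝ (Fin n), x ≠ 0 →
      (inner ℝ (gradient V₁ x) (H s x) : ℝ) < 0) ∧
    (∀ s ∈ Set.Icc (1/2 : ℝ) 1, ∀ x : EuclideanSpace ℝ (Fin n), x ≠ 0 →
      (inner ℝ (gradient V₂ x) (H s x) : ℝ) < 0) := by
  have key₁ : ∀ x : EuclideanSpace ℝ (Fin n), x ≠ 0 →
      0 < (inner ℝ (gradient V₁ x) x : ℝ) := fun x hx =>
    lt_of_lt_of_le (hV₁pos x hx) (grad_inner_self_key V₁ hV₁_smooth hV₁_convex hV₁0 x)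
  have key₂ : ∀ x : EuclideanSpace ℝ (Fin n), x ≠ 0 →
      0 < (inner ℝ (gradient V₂ x) x : ℝ) := fun x hx =>
    lt_of_lt_of_le (hV₂pos x hx) (grad_inner_self_key V₂ hV₂_smooth hV₂_convex hV₂0 x)
  refine ⟨?_, ?_, ?_, ?_, ?_⟩
  · -- continuity
    have hfun : (fun p : ℝ × EuclideanSpace ℝ (Fin n) => H p.1 p.2) =
        fun p => if p.1 ≤ 1/2 then (-(2*p.1)) • p.2 + (1 - 2*p.1) • F₁ p.2
          else (-(2 - 2*p.1)) • p.2 + (2*p.1 - 1) • F₂ p.2 := by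
      funext p; exact hH p.1 p.2
    rw [hfun]
    apply Continuous.continuousOn
    apply Continuous.if_le
    · exact ((continuous_const.mul continuous_fst).neg.smul continuous_snd).add
        ((continuous_const.sub (continuous_const.mul continuous_fst)).smul
          (hF₁.comp continuous_snd))
    · exact ((continuous_const.sub (continuous_const.mul continuous_fst)).neg.smul
        continuous_snd).add
        (((continuous_const.mul continuous_fst).sub continuous_const).smul
          (hF₂.comp continuous_snd))
    · exact continuous_fst
    · exact continuous_const
    · intro p hp
      rw [hp]
      norm_num
  · intro x; rw [hH]; norm_num
  · intro x; rw [hH]; norm_num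
  · intro s hs x hx
    rw [hH]
    rw [if_pos hs.2]
    rw [inner_add_right, real_inner_smul_right, real_inner_smul_right]
    have h1 := key₁ x hx
    have h2 := hV₁dec x hx
    rcases eq_or_lt_of_le hs.1 with h0 | h0
    · rw [← h0]; simpa using h2
    · have t1 : -(2*s) * (inner ℝ (gradient V₁ x) x : ℝ) < 0 :=
        mul_neg_of_neg_of_pos (by linarith) h1
      have t2 : (1 - 2*s) * (inner ℝ (gradient V₁ x) (F₁ x) : ℝ) ≤ 0 :=
        mul_nonpos_of_nonneg_of_nonpos (by linarith [hs.2]) h2.le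
      linarith
  · intro s hs x hx
    rw [hH]
    by_cases h : s ≤ 1/2
    · have hs2 : s = 1/2 := le_antisymm h hs.1
      subst hs2
      rw [if_pos le_rfl]
      rw [inner_add_right, real_inner_smul_right, real_inner_smul_right]
      have h1 := key₂ x hx
      have h2 := hV₂dec x hx
      linarith
    · rw [if_neg h]
      rw [inner_add_right, real_inner_smul_right, real_inner_smul_right]
      have h1 := key₂ x hx
      have h2 := hV₂dec x hx
      push_neg at h
      rcases eq_or_lt_of_le hs.2 with h0 | h0
      · rw [h0]; linarith
      · have t1 : -(2 - 2*s) * (inner ℝ (gradient V₂ x) x : ℝ) < 0 :=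
          mul_neg_of_neg_of_pos (by linarith) h1
        have t2 : (2*s - 1) * (inner ℝ (gradient V₂ x) (F₂ x) : ℝ) ≤ 0 :=
          mul_nonpos_of_nonneg_of_nonpos (by linarith) h2.le
        linarith
end

section
/- Let f : ℝⁿ × ℝᵐ → ℝⁿ be continuous and let V : ℝⁿ → ℝ be a convex smooth control Lyapunov function for f with respect to the origin. Then for every s ∈ [0,1], V is a control Lyapunov function for the control system on the straight-line homotopy between f and the map (x,u) ↦ -x: for every x ≠ 0 there exists u ∈ ℝᵐ such that ⟨∇V(x), s·f(x,u) - (1-s)·x⟩ < 0. -/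
open Filter

/-- Key auxiliary fact: for a convex differentiable `V` with `V 0 = 0`,
`⟨∇V x, x⟩ ≥ V x`. -/
lemma inner_gradient_self_ge
    (n : ℕ) (V : EuclideanSpace ℝ (Fin n) → ℝ)
    (hV_smooth : ContDiff ℝ (⊤ : ℕ∞) V)
    (hV_convex : ConvexOn ℝ Set.univ V)
    (hV0 : V 0 = 0) (x : EuclideanSpace ℝ (Fin n)) :
    V x ≤ (inner ℝ (gradient V x) x : ℝ) := by
  set A : ℝ →ᵃ[ℝ] EuclideanSpace ℝ (Fin n) := AffineMap.lineMap x (0 : EuclideanSpace ℝ (Fin n))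
  have hA : ∀ t : ℝ, A t = (1 - t) • x := by
    intro t
    simp [A, AffineMap.lineMap_apply, sub_smul]
    module
  have hg_convex : ConvexOn ℝ Set.univ (V ∘ A) := by
    have := hV_convex.comp_affineMap A
    simpa using this
  -- derivative of `V ∘ A` at 0 is `⟨∇V x, -x⟩`
  have hdiff : DifferentiableAt ℝ V x := (hV_smooth.differentiable (by simp)) x
  have hgrad : HasGradientAt V (gradient V x) x := hdiff.hasGradientAt
  have hfd : HasFDerivAt V ((InnerProductSpace.toDual ℝ _) (gradient V x)) x :=
    hasGradientAt_iff_hasFDerivAt.mp hgrad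
  have hA' : HasDerivAt (fun t : ℝ => A t) (-x) 0 := by
    have h1 : HasDerivAt (fun t : ℝ => (1 - t) • x) (((0:ℝ) - 1) • x) 0 :=
      ((hasDerivAt_const (0:ℝ) (1:ℝ)).sub (hasDerivAt_id 0)).smul_const x
    have : HasDerivAt (fun t : ℝ => (1 - t) • x) (-x) 0 := by
      convert h1 using 1; module
    exact this.congr_of_eventuallyEq (Filter.Eventually.of_forall fun t => (hA t))
  have hcomp : HasDerivAt (V ∘ A) ((inner ℝ (gradient V x) (-x) : ℝ)) 0 := by
    have hx0 : A 0 = x := by rw [hA]; simp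
    rw [← hx0] at hfd
    have := hfd.comp_hasDerivAt (x := (0:ℝ)) hA'
    simpa [InnerProductSpace.toDual_apply_apply, hx0] using this
  have hle : (inner ℝ (gradient V x) (-x) : ℝ) ≤ slope (V ∘ A) 0 1 :=
    hg_convex.le_slope_of_hasDerivAt (Set.mem_univ 0) (Set.mem_univ 1) one_pos hcomp
  have hslope : slope (V ∘ A) 0 1 = - V x := by
    simp [slope, Function.comp, hA 0, hA 1, hV0]
  rw [hslope, inner_neg_right] at hle
  linarith

/-- A convex smooth control Lyapunov function `V` for `f` (w.r.t. the
origin) is a CLF for every control system on the straight-line homotopy between `f` and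
`(x,u) ↦ -x`. -/
theorem convex_CLF_straight_line_homotopy
    (n m : ℕ)
    (f : EuclideanSpace ℝ (Fin n) × (Fin m → ℝ) → EuclideanSpace ℝ (Fin n))
    (hf : Continuous f)
    (V : EuclideanSpace ℝ (Fin n) → ℝ)
    (hV_smooth : ContDiff ℝ (⊤ : ℕ∞) V)
    (hV_convex : ConvexOn ℝ Set.univ V)
    (hV0 : V 0 = 0)
    (hVpos : ∀ x : EuclideanSpace ℝ (Fin n), x ≠ 0 → 0 < V x)
    (hVrad : Tendsto V (cocompact (EuclideanSpace ℝ (Fin n))) atTop)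
    (hVdec : ∀ x : EuclideanSpace ℝ (Fin n), x ≠ 0 → ∃ u : Fin m → ℝ,
      (inner ℝ (gradient V x) (f (x, u)) : ℝ) < 0) :
    ∀ s ∈ Set.Icc (0:ℝ) 1, ∀ x : EuclideanSpace ℝ (Fin n), x ≠ 0 →
      ∃ u : Fin m → ℝ, (inner ℝ (gradient V x) (s • f (x, u) - (1 - s) • x) : ℝ) < 0 := by
  intro s hs x hx
  obtain ⟨hs0, hs1⟩ := hs
  have hxpos : (0:ℝ) < inner ℝ (gradient V x) x :=
    lt_of_lt_of_le (hVpos x hx) (inner_gradient_self_ge n V hV_smooth hV_convex hV0 x)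
  obtain ⟨u, hu⟩ := hVdec x hx
  refine ⟨u, ?_⟩
  rw [inner_sub_right, real_inner_smul_right, real_inner_smul_right]
  rcases eq_or_lt_of_le hs0 with h | h
  · have : (1 - s) * inner ℝ (gradient V x) x > 0 := by
      rw [← h]; simpa using hxpos
    nlinarith
  · have h1 : s * (inner ℝ (gradient V x) (f (x, u)) : ℝ) < 0 := mul_neg_of_pos_of_neg h hu
    have h2 : 0 ≤ (1 - s) * (inner ℝ (gradient V x) x : ℝ) :=
      mul_nonneg (by linarith) hxpos.le
    linarith
end

section
/- Let F : ℝⁿ → ℝⁿ be a continuous vector field. If there exists a convex smooth Lyapunov function for F with respect to the origin, then F(x) ≠ λ·x for every λ ≥ 0 and every x ≠ 0. In particular, F has no equilibrium point other than the origin and never points radially outward. -/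
open Filter

/-- If the vector field `F` admits a convex smooth Lyapunov function with
respect to the origin, then `F x ≠ λ • x` for every `λ ≥ 0` and every `x ≠ 0`. -/
theorem convex_lyapunov_necessary_condition
    (n : ℕ)
    (F : EuclideanSpace ℝ (Fin n) → EuclideanSpace ℝ (Fin n)) (hF : Continuous F)
    (hV : ∃ V : EuclideanSpace ℝ (Fin n) → ℝ,
      ContDiff ℝ (⊤ : ℕ∞) V ∧
      ConvexOn ℝ Set.univ V ∧
      V 0 = 0 ∧
      (∀ x : EuclideanSpace ℝ (Fin n), x ≠ 0 → 0 < V x) ∧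
      (∀ x : EuclideanSpace ℝ (Fin n), x ≠ 0 →
        (inner ℝ (gradient V x) (F x) : ℝ) < 0) ∧
      Tendsto V (cocompact (EuclideanSpace ℝ (Fin n))) atTop) :
    ∀ l : ℝ, 0 ≤ l → ∀ x : EuclideanSpace ℝ (Fin n), x ≠ 0 → F x ≠ l • x := by
  obtain ⟨V, hsm, hconv, hV0, hVpos, hVdec, _⟩ := hV
  intro l hl x hx hFx
  -- the function g t = V (t • x) is convex on ℝ
  set g : ℝ → ℝ := fun t => V (t • x) with hg
  have hgconv : ConvexOn ℝ Set.univ g := by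
    have := hconv.comp_affineMap ((LinearMap.toSpanSingleton ℝ
      (EuclideanSpace ℝ (Fin n)) x).toAffineMap)
    exact this
  -- V is differentiable
  have hdiff : DifferentiableAt ℝ V x := (hsm.differentiable (by simp)).differentiableAt
  have hgrad : HasGradientAt V (gradient V x) x := hdiff.hasGradientAt
  -- derivative of g at 1 is ⟪∇V x, x⟫
  have hd : HasDerivAt g (inner ℝ (gradient V x) x : ℝ) 1 := by
    have h1 : HasDerivAt (fun t : ℝ => t • x) x 1 := by
      simpa using (hasDerivAt_id (1 : ℝ)).smul_const x
    have h2 : HasFDerivAt V ((InnerProductSpace.toDual ℝ _) (gradient V x)) ((1:ℝ) • x) := by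
      rw [one_smul]; exact hgrad.hasFDerivAt
    have := h2.comp_hasDerivAt 1 h1
    simp only [InnerProductSpace.toDual_apply_apply] at this
    exact this
  -- convexity: slope from 0 to 1 is ≤ derivative at 1
  have hslope : slope g 0 1 ≤ (inner ℝ (gradient V x) x : ℝ) :=
    hgconv.slope_le_of_hasDerivAt (Set.mem_univ 0) (Set.mem_univ 1) one_pos hd
  have hslope' : slope g 0 1 = V x := by
    simp [slope, hg, hV0]
  have hkey : V x ≤ (inner ℝ (gradient V x) x : ℝ) := hslope' ▸ hslope
  have hpos := hVpos x hx
  have hneg := hVdec x hx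
  rw [hFx, real_inner_smul_right] at hneg
  nlinarith
end

section
/- Let F : ℝⁿ → ℝⁿ be a continuous vector field, let V : ℝⁿ → ℝ be a convex smooth Lyapunov function for F with respect to the origin, and let λ : ℝⁿ → ℝ be any continuous function with λ(x) ≥ 0 for all x. Then V is also a smooth Lyapunov function for the vector field x ↦ F(x) - λ(x)·x: for all x ≠ 0, ⟨∇V(x), F(x) - λ(x)·x⟩ < 0. -/
open Filter

/-- If `V` is a convex smooth Lyapunov function for `F` w.r.t. the origin
and `λ : ℝⁿ → ℝ` is continuous with `λ x ≥ 0`, then `V` is also a Lyapunov function for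
`x ↦ F x - λ x • x`. -/
theorem convex_lyapunov_radial_damping
    (n : ℕ)
    (F : EuclideanSpace ℝ (Fin n) → EuclideanSpace ℝ (Fin n)) (hF : Continuous F)
    (V : EuclideanSpace ℝ (Fin n) → ℝ)
    (hV_smooth : ContDiff ℝ (⊤ : ℕ∞) V)
    (hV_convex : ConvexOn ℝ Set.univ V)
    (hV0 : V 0 = 0)
    (hVpos : ∀ x : EuclideanSpace ℝ (Fin n), x ≠ 0 → 0 < V x)
    (hVdec : ∀ x : EuclideanSpace ℝ (Fin n), x ≠ 0 →
      (inner ℝ (gradient V x) (F x) : ℝ) < 0)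
    (hVrad : Tendsto V (cocompact (EuclideanSpace ℝ (Fin n))) atTop)
    (lam : EuclideanSpace ℝ (Fin n) → ℝ) (hlam_cont : Continuous lam)
    (hlam_nonneg : ∀ x, 0 ≤ lam x) :
    ∀ x : EuclideanSpace ℝ (Fin n), x ≠ 0 →
      (inner ℝ (gradient V x) (F x - lam x • x) : ℝ) < 0 := by
  intro x hx
  have hdiff : DifferentiableAt ℝ V x := hV_smooth.differentiable (by simp) x
  -- g t = V (t • x) is convex on ℝ
  set g : ℝ → ℝ := fun t => V (t • x) with hg
  have hgconv : ConvexOn ℝ Set.univ g := by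
    have := hV_convex.comp_affineMap (AffineMap.lineMap (0 : EuclideanSpace ℝ (Fin n)) x)
    have heq : (V ∘ (AffineMap.lineMap (0 : EuclideanSpace ℝ (Fin n)) x)) = g := by
      funext t
      simp [g, AffineMap.lineMap_apply]
    rw [heq] at this
    simpa using this
  -- derivative of g at 1 is ⟪∇V x, x⟫
  have hsmul : HasDerivAt (fun t : ℝ => t • x) x 1 := by
    simpa using (hasDerivAt_id (1 : ℝ)).smul_const x
  have hVx : HasFDerivAt V (fderiv ℝ V x) x := hdiff.hasFDerivAt
  have hVx' : HasFDerivAt V (fderiv ℝ V ((1:ℝ) • x)) ((1:ℝ) • x) := by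
    simpa using hVx
  have hgd : HasDerivAt g (fderiv ℝ V x x) 1 := by
    have := hVx'.comp_hasDerivAt 1 hsmul
    simp only [one_smul] at this
    exact this
  have hfd_eq : fderiv ℝ V x x = (inner ℝ (gradient V x) x : ℝ) := by
    have hgrad : HasGradientAt V (gradient V x) x := hdiff.hasGradientAt
    have := hgrad.hasFDerivAt.fderiv
    rw [this]
    simp [InnerProductSpace.toDual_apply_apply]
  -- subgradient inequality: V x = slope g 0 1 ≤ g'(1)
  have hslope : slope g 0 1 ≤ fderiv ℝ V x x :=
    hgconv.slope_le_of_hasDerivAt (Set.mem_univ 0) (Set.mem_univ 1) one_pos hgd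
  have hslope_eq : slope g 0 1 = V x := by
    simp [slope_def_field, g, hV0]
  have hinner_pos : 0 < (inner ℝ (gradient V x) x : ℝ) := by
    rw [← hfd_eq]
    calc (0:ℝ) < V x := hVpos x hx
    _ = slope g 0 1 := hslope_eq.symm
    _ ≤ _ := hslope
  have h1 : (inner ℝ (gradient V x) (F x - lam x • x) : ℝ)
      = inner ℝ (gradient V x) (F x) - lam x * inner ℝ (gradient V x) x := by
    rw [inner_sub_right, real_inner_smul_right]
  rw [h1]
  have := mul_nonneg (hlam_nonneg x) hinner_pos.le
  linarith [hVdec x hx]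
end

section
/- Let f : ℝⁿ × ℝᵐ → ℝⁿ be continuous. If the control system ẋ = f(x,u) admits a convex smooth control Lyapunov function with respect to the origin, then for every x ≠ 0 there exists u ∈ ℝᵐ such that f(x,u) ≠ λ·x for all λ ≥ 0. -/
open Filter

/-- If the control system `ẋ = f(x,u)` admits a convex smooth control
Lyapunov function w.r.t. the origin, then for every `x ≠ 0` there is a control `u` such
that `f(x,u) ≠ λ • x` for all `λ ≥ 0`. -/
theorem convex_CLF_necessary_condition
    (n m : ℕ)
    (f : EuclideanSpace ℝ (Fin n) × (Fin m → ℝ) → EuclideanSpace ℝ (Fin n))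
    (hf : Continuous f)
    (hV : ∃ V : EuclideanSpace ℝ (Fin n) → ℝ,
      ContDiff ℝ (⊤ : ℕ∞) V ∧
      ConvexOn ℝ Set.univ V ∧
      V 0 = 0 ∧
      (∀ x : EuclideanSpace ℝ (Fin n), x ≠ 0 → 0 < V x) ∧
      Tendsto V (cocompact (EuclideanSpace ℝ (Fin n))) atTop ∧
      (∀ x : EuclideanSpace ℝ (Fin n), x ≠ 0 → ∃ u : Fin m → ℝ,
        (inner ℝ (gradient V x) (f (x, u)) : ℝ) < 0)) :
    ∀ x : EuclideanSpace ℝ (Fin n), x ≠ 0 → ∃ u : Fin m → ℝ,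
      ∀ l : ℝ, 0 ≤ l → f (x, u) ≠ l • x := by
  obtain ⟨V, hsm, hconv, hV0, hVpos, _, hdec⟩ := hV
  intro x hx
  obtain ⟨u, hu⟩ := hdec x hx
  refine ⟨u, fun l hl hflx => ?_⟩
  -- Key claim: ⟪∇V x, x⟫ ≥ V x > 0 by convexity.
  have hdiff : Differentiable ℝ V := hsm.differentiable (by simp)
  have hgrad : ∀ y : EuclideanSpace ℝ (Fin n), HasGradientAt V (gradient V y) y :=
    fun y => (hdiff y).hasGradientAt
  -- g t = V (t • x)
  set g : ℝ → ℝ := fun t => V (t • x) with hg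
  have hgderiv : HasDerivAt g (inner ℝ (gradient V x) x : ℝ) 1 := by
    have h1 : HasDerivAt (fun t : ℝ => t • x) x 1 := by
      simpa using (hasDerivAt_id (1 : ℝ)).smul_const x
    have h2 : HasFDerivAt V (InnerProductSpace.toDualMap ℝ _ (gradient V x)) ((1:ℝ) • x) := by
      rw [one_smul]
      exact (hasGradientAt_iff_hasFDerivAt).mp (hgrad x)
    simpa [Function.comp_def] using h2.comp_hasDerivAt (1 : ℝ) h1
  have hgconv : ConvexOn ℝ Set.univ g := by
    have := hconv.comp_affineMap (LinearMap.toSpanSingleton ℝ _ x).toAffineMap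
    simpa [Function.comp_def, hg, LinearMap.toSpanSingleton_apply] using this
  have hslope : V x ≤ (inner ℝ (gradient V x) x : ℝ) := by
    have := hgconv.slope_le_of_hasDerivAt (Set.mem_univ (0:ℝ)) (Set.mem_univ (1:ℝ))
      zero_lt_one hgderiv
    simpa [slope, hg, hV0] using this
  have hVx : 0 < V x := hVpos x hx
  have hinnerpos : 0 < (inner ℝ (gradient V x) x : ℝ) := lt_of_lt_of_le hVx hslope
  rw [hflx] at hu
  rw [real_inner_smul_right] at hu
  nlinarith
end

section
/- Let A ⊆ ℝⁿ be a nonempty compact convex set, let F : ℝⁿ → ℝⁿ be continuous, and let V : ℝⁿ → ℝ be a C^∞ convex function with V(x) = 0 if and only if x ∈ A, V(x) > 0 for x ∉ A, V radially unbounded, and ⟨∇V(x), F(x)⟩ < 0 for all x ∉ A. Then for every x ∉ A, every point a ∈ A (in particular the metric projection Π_A(x), i.e. the unique point of A minimizing the distance to x), and every s ∈ [0,1], one has ⟨∇V(x), s·F(x) + (1-s)·(a - x)⟩ < 0. In particular V is a Lyapunov function for every vector field on the straight-line homotopy between F and x ↦ Π_A(x) - x on ℝⁿ \ A, so A remains globally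 asymptotically stable throughout the homotopy. -/
open Filter

/-- If `A ⊆ ℝⁿ` is nonempty compact convex and `V` is a smooth convex
Lyapunov function asserting `A` is GAS (`V = 0` exactly on `A`, `V > 0` off `A`, radially
unbounded, decreasing along `F` off `A`), then the metric projection onto `A` is
well-defined (unique closest point), and for every `x ∉ A`, every `a ∈ A` (in particular
`a = Π_A x`) and every `s ∈ [0,1]` one has `⟪∇V x, s • F x + (1-s) • (a - x)⟫ < 0`; i.e.
`V` certifies `A` is GAS along the straight-line homotopy between `F` and `Π_A - id`. -/
theorem convex_lyapunov_compact_convex_set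
    (n : ℕ)
    (A : Set (EuclideanSpace ℝ (Fin n)))
    (hA_ne : A.Nonempty) (hA_cpt : IsCompact A) (hA_cvx : Convex ℝ A)
    (F : EuclideanSpace ℝ (Fin n) → EuclideanSpace ℝ (Fin n)) (hF : Continuous F)
    (V : EuclideanSpace ℝ (Fin n) → ℝ)
    (hV_smooth : ContDiff ℝ (⊤ : ℕ∞) V)
    (hV_convex : ConvexOn ℝ Set.univ V)
    (hV0 : ∀ x : EuclideanSpace ℝ (Fin n), V x = 0 ↔ x ∈ A)
    (hVpos : ∀ x : EuclideanSpace ℝ (Fin n), x ∉ A → 0 < V x)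
    (hVrad : Tendsto V (cocompact (EuclideanSpace ℝ (Fin n))) atTop)
    (hVdec : ∀ x : EuclideanSpace ℝ (Fin n), x ∉ A →
      (inner ℝ (gradient V x) (F x) : ℝ) < 0) :
    (∀ x : EuclideanSpace ℝ (Fin n),
      ∃! a : EuclideanSpace ℝ (Fin n), a ∈ A ∧ ∀ y ∈ A, ‖x - a‖ ≤ ‖x - y‖) ∧
    (∀ x : EuclideanSpace ℝ (Fin n), x ∉ A → ∀ a ∈ A, ∀ s ∈ Set.Icc (0:ℝ) 1,
      (inner ℝ (gradient V x) (s • F x + (1 - s) • (a - x)) : ℝ) < 0) := by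
  constructor
  · -- unique closest point
    intro x
    obtain ⟨a, haA, hmin⟩ := hA_cpt.exists_isMinOn hA_ne
      (Continuous.continuousOn (by continuity : Continuous fun y => ‖x - y‖))
    refine ⟨a, ⟨haA, fun y hy => hmin hy⟩, ?_⟩
    rintro b ⟨hbA, hbmin⟩
    have hab : ‖x - a‖ = ‖x - b‖ := le_antisymm (hmin hbA) (hbmin a haA)
    -- midpoint argument
    have hm : midpoint ℝ a b ∈ A := hA_cvx.segment_subset haA hbA (midpoint_mem_segment a b)
    have h1 : ‖x - b‖ ≤ ‖x - midpoint ℝ a b‖ := hbmin _ hm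
    have hpar := parallelogram_law_with_norm ℝ (x - a) (x - b)
    have hmid : midpoint ℝ a b = (2⁻¹:ℝ) • (a + b) := by
      rw [midpoint_eq_smul_add, invOf_eq_inv]
    have e1 : (x - a) + (x - b) = (2:ℝ) • (x - midpoint ℝ a b) := by
      rw [hmid]; module
    have e2 : (x - a) - (x - b) = b - a := by abel
    rw [e1, e2, norm_smul] at hpar
    have h2 : ‖x - b‖ ^ 2 ≤ ‖x - midpoint ℝ a b‖ ^ 2 := by
      have := norm_nonneg (x - b); nlinarith
    have : ‖b - a‖ = 0 := by
      rw [hab] at hpar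
      simp only [Real.norm_ofNat] at hpar
      have := norm_nonneg (b - a)
      nlinarith
    have : b - a = 0 := norm_eq_zero.mp this
    have : b = a := by linear_combination (norm := module) this
    exact this
  · -- Lyapunov inequality along homotopy
    intro x hx a ha s hs
    set g := gradient V x with hg
    have hdiff : DifferentiableAt ℝ V x := (hV_smooth.differentiable (by simp)).differentiableAt
    have hgrad : HasGradientAt V g x := hdiff.hasGradientAt
    -- key: ⟪g, a - x⟫ ≤ V a - V x
    have hkey : (inner ℝ g (a - x) : ℝ) ≤ V a - V x := by
      set f : ℝ → ℝ := fun t => V (x + t • (a - x)) with hf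
      have hconv : ConvexOn ℝ Set.univ f := by
        have h := hV_convex.comp_affineMap (AffineMap.lineMap x a : ℝ →ᵃ[ℝ] _)
        have hfe : f = V ∘ ⇑(AffineMap.lineMap x a : ℝ →ᵃ[ℝ] _) := by
          funext t
          simp [hf, Function.comp, AffineMap.lineMap_apply, add_comm]
        rw [hfe]
        simpa using h
      have hcurve : HasDerivAt (fun t : ℝ => x + t • (a - x)) (a - x) 0 := by
        simpa using ((hasDerivAt_id (0:ℝ)).smul_const (a - x)).const_add x
      have hfd : HasFDerivAt V (InnerProductSpace.toDual ℝ _ g) x :=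
        hasGradientAt_iff_hasFDerivAt.mp hgrad
      have hfd0 : HasFDerivAt V (InnerProductSpace.toDual ℝ _ g) (x + (0:ℝ) • (a - x)) := by
        simpa using hfd
      have hderiv : HasDerivAt f (inner ℝ g (a - x) : ℝ) 0 := by
        have := hfd0.comp_hasDerivAt 0 hcurve
        simp only [InnerProductSpace.toDual_apply_apply] at this
        exact this
      have := hconv.le_slope_of_hasDerivAt (Set.mem_univ (0:ℝ)) (Set.mem_univ (1:ℝ))
        one_pos hderiv
      simpa [hf, slope_def_field] using this
    have hVa : V a = 0 := (hV0 a).mpr ha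
    have hVx : 0 < V x := hVpos x hx
    have h2 : (inner ℝ g (a - x) : ℝ) < 0 := by linarith
    have h1 : (inner ℝ g (F x) : ℝ) < 0 := hVdec x hx
    obtain ⟨hs0, hs1⟩ := hs
    rw [inner_add_right, real_inner_smul_right, real_inner_smul_right]
    rcases eq_or_lt_of_le hs1 with h | h
    · subst h; simpa using h1
    · nlinarith
end

section
/- Let A be a real n×n matrix and B a real n×m matrix satisfying the Hautus stabilizability condition: for every complex number λ with Re λ ≥ 0 that is an eigenvalue of A (viewed as a complex matrix), the block matrix [A - λI B] has rank n over ℂ. Then for every x ∈ ℝⁿ with x ≠ 0 there exists u ∈ ℝᵐ such that A·x + B·u ≠ λ·x for all real λ ≥ 0. -/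
/-- The Hautus stabilizability test: if for every `λ ∈ ℂ` with
`Re λ ≥ 0` in the spectrum of (the complexification of) `A` the block matrix
`[A - λI  B]` has full rank `n` (i.e. the associated linear map is surjective), then for
every real `x ≠ 0` there is `u ∈ ℝᵐ` with `A·x + B·u ≠ λ·x` for all real `λ ≥ 0`. -/
theorem hautus_implies_no_radial_fixed_direction
    (n m : ℕ)
    (A : Matrix (Fin n) (Fin n) ℝ) (B : Matrix (Fin n) (Fin m) ℝ)
    (hHautus : ∀ l : ℂ, 0 ≤ l.re →
      l ∈ spectrum ℂ (A.map ((↑) : ℝ → ℂ)) →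
      Function.Surjective (fun p : (Fin n → ℂ) × (Fin m → ℂ) =>
        (A.map ((↑) : ℝ → ℂ) - l • (1 : Matrix (Fin n) (Fin n) ℂ)).mulVec p.1
          + (B.map ((↑) : ℝ → ℂ)).mulVec p.2)) :
    ∀ x : Fin n → ℝ, x ≠ 0 → ∃ u : Fin m → ℝ,
      ∀ l : ℝ, 0 ≤ l → A.mulVec x + B.mulVec u ≠ l • x := by
  intro x hx
  by_contra hcon
  push_neg at hcon
  -- for every `u` there is `l ≥ 0` with `A x + B u = l • x`
  have h : ∀ u : Fin m → ℝ, ∃ l : ℝ, 0 ≤ l ∧ A.mulVec x + B.mulVec u = l • x := by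
    intro u
    obtain ⟨l, hl, hl'⟩ := hcon u
    exact ⟨l, hl, hl'⟩
  -- scalar extraction
  have hscal : ∀ a b : ℝ, a • x = b • x → a = b := by
    intro a b hab
    have : (a - b) • x = 0 := by rw [sub_smul, hab, sub_self]
    rcases smul_eq_zero.mp this with h' | h'
    · linarith [sub_eq_zero.mp (by linarith [h'] : a - b = 0)]
    · exact absurd h' hx
  obtain ⟨l0, hl0, hA0⟩ := h 0
  have hA : A.mulVec x = l0 • x := by
    simpa [Matrix.mulVec_zero] using hA0
  -- every `B u` vanishes
  have hB : ∀ u : Fin m → ℝ, B.mulVec u = 0 := by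
    intro u
    obtain ⟨l1, _, h1⟩ := h u
    have hBu : B.mulVec u = (l1 - l0) • x := by
      rw [hA] at h1
      have := sub_eq_of_eq_add' h1.symm
      rw [← this, sub_smul]
    set c := l1 - l0 with hc
    -- for every `t`, `0 ≤ l0 + t * c`
    have key : ∀ t : ℝ, 0 ≤ l0 + t * c := by
      intro t
      obtain ⟨lt, hlt, ht⟩ := h (t • u)
      have : (l0 + t * c) • x = lt • x := by
        rw [add_smul, ← hA, mul_smul, ← hBu, ← Matrix.mulVec_smul, ht]
      rw [hscal _ _ this]; exact hlt
    have hc0 : c = 0 := by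
      by_contra hcne
      have := key (-(l0 + 1) / c)
      rw [div_mul_cancel₀ _ hcne] at this
      linarith
    rw [hBu, hc0, zero_smul]
  -- hence B = 0
  have hBzero : B = 0 := by
    ext i j
    have := congrFun (hB (Pi.single j 1)) i
    simpa using this
  -- complexifications
  set AC := A.map ((↑) : ℝ → ℂ) with hAC
  set xC : Fin n → ℂ := fun i => ((x i : ℂ)) with hxC
  have hxCne : xC ≠ 0 := by
    intro hzero
    apply hx
    funext i
    have := congrFun hzero i
    simpa [hxC] using this
  have hACx : AC.mulVec xC = (l0 : ℂ) • xC := by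
    funext i
    have := congrFun hA i
    simp only [Matrix.mulVec, dotProduct, Pi.smul_apply, smul_eq_mul] at this ⊢
    simp only [hAC, Matrix.map_apply, hxC]
    rw [show (∑ j, (A i j : ℂ) * (x j : ℂ)) = ((∑ j, A i j * x j : ℝ) : ℂ) by push_cast; ring]
    rw [this]
    push_cast
    ring
  have hMx : (AC - (l0 : ℂ) • (1 : Matrix (Fin n) (Fin n) ℂ)).mulVec xC = 0 := by
    rw [Matrix.sub_mulVec, hACx, Matrix.smul_mulVec, Matrix.one_mulVec, sub_self]
  -- l0 is in the spectrum
  have hspec : ((l0 : ℂ)) ∈ spectrum ℂ AC := by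
    rw [spectrum.mem_iff]
    intro hunit
    have hdet : ((algebraMap ℂ (Matrix (Fin n) (Fin n) ℂ)) (l0 : ℂ) - AC).det ≠ 0 := by
      have := (Matrix.isUnit_iff_isUnit_det _).mp hunit
      exact isUnit_iff_ne_zero.mp this
    apply hdet
    rw [← Matrix.exists_mulVec_eq_zero_iff]
    refine ⟨xC, hxCne, ?_⟩
    have : (algebraMap ℂ (Matrix (Fin n) (Fin n) ℂ)) (l0 : ℂ) - AC
        = -(AC - (l0 : ℂ) • (1 : Matrix (Fin n) (Fin n) ℂ)) := by
      rw [neg_sub, Algebra.algebraMap_eq_smul_one]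
    rw [this, Matrix.neg_mulVec, hMx, neg_zero]
  -- Hautus gives surjectivity, hence injectivity, contradiction
  have hsurj := hHautus (l0 : ℂ) (by simpa using hl0) hspec
  set M := AC - (l0 : ℂ) • (1 : Matrix (Fin n) (Fin n) ℂ) with hM
  have hBC : B.map ((↑) : ℝ → ℂ) = 0 := by
    rw [hBzero]; ext i j; simp
  have hsurjM : Function.Surjective M.mulVecLin := by
    intro y
    obtain ⟨p, hp⟩ := hsurj y
    refine ⟨p.1, ?_⟩
    simp only [hBC, Matrix.zero_mulVec, add_zero] at hp
    simpa [Matrix.mulVecLin_apply] using hp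
  have hinjM : Function.Injective M.mulVecLin :=
    (LinearMap.injective_iff_surjective).mpr hsurjM
  apply hxCne
  have : M.mulVecLin xC = M.mulVecLin 0 := by
    simp [Matrix.mulVecLin_apply, hMx]
  exact hinjM this
end
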